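/- Let C be an extended Choquet cone and let w ∈ Idem(C). Then the set {x ∈ C : w ≫ ε(x)} is open in C. -/

import Mathlib

open scoped ENNReal NNReal

/-- The positive real numbers, used as scalars for cones. -/
abbrev PosReal : Type := {t : ℝ // 0 < t}

/-- An extended Choquet cone: an algebraically ordered topological cone that is a lattice
under the algebraic order, with addition distributing over `⊓` and `⊔`, whose topology is
compact, Hausdorff and locally convex. -/
class ECCone (C : Type*) extends AddCommMonoid C, Lattice C, TopologicalSpace C where
  psmul : PosReal → C → C
  psmul_add : ∀ (t : PosReal) (x y : C), psmul t (x + y) = psmul t x + psmul t y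
  add_psmul : ∀ (s t : PosReal) (x : C), psmul (s + t) x = psmul s x + psmul t x
  psmul_mul : ∀ (s t : PosReal) (x : C), psmul s (psmul t x) = psmul (s * t) x
  one_psmul : ∀ x : C, psmul 1 x = x
  psmul_zero : ∀ t : PosReal, psmul t 0 = 0
  le_iff_exists_add : ∀ x y : C, x ≤ y ↔ ∃ z, x + z = y
  add_inf_distrib : ∀ x y z : C, x + (y ⊓ z) = (x + y) ⊓ (x + z)
  add_sup_distrib : ∀ x y z : C, x + (y ⊔ z) = (x + y) ⊔ (x + z)
  continuous_add' : Continuous fun p : C × C => p.1 + p.2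
  continuous_psmul : Continuous fun p : PosReal × C => psmul p.1 p.2
  compact : CompactSpace C
  t2 : T2Space C
  locally_convex : ∀ (x : C) (U : Set C), IsOpen U → x ∈ U →
    ∃ V : Set C, IsOpen V ∧ x ∈ V ∧ V ⊆ U ∧
      ∀ y ∈ V, ∀ z ∈ V, ∀ s t : PosReal, s.1 + t.1 = 1 → psmul s y + psmul t z ∈ V

/-- The way-below relation for functions into `[0,∞]`, relative to a set `S` of functions:
`f ≪ g` iff for every increasing sequence in `S` whose pointwise supremum dominates `g`,
some term of the sequence dominates `f`. -/
def FWayBelow {α : Type*} (S : Set (α → ℝ≥0∞)) (f g : α → ℝ≥0∞) : Prop :=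
  ∀ h : ℕ → α → ℝ≥0∞, (∀ n, h n ∈ S) → Monotone h → (∀ a, g a ≤ ⨆ n, h n a) → ∃ n, f ≤ h n

namespace ECCone

variable {C : Type*} [ECCone C]

/-- `w` is an idempotent: `2w = w`. -/
def IsIdem (w : C) : Prop := w + w = w

/-- `e` is the support idempotent of `x`: the maximum of `{z : x + z = x}`. -/
def IsSuppIdem (x e : C) : Prop := x + e = x ∧ ∀ z : C, x + z = x → z ≤ e

/-- `w₁ ≫ w₂` in the lattice of idempotents with the opposite order: whenever a nonempty
downward directed family of idempotents has an infimum `≤ w₂`, some member is `≤ w₁`. -/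
def IdemWayBelow (w₁ w₂ : C) : Prop :=
  ∀ D : Set C, D.Nonempty → (∀ v ∈ D, IsIdem v) → DirectedOn (· ≥ ·) D →
    ∀ m : C, IsGLB D m → m ≤ w₂ → ∃ v ∈ D, v ≤ w₁

/-- A compact idempotent: `w ≫ w`. -/
def IsCompactIdem (w : C) : Prop := IsIdem w ∧ IdemWayBelow w w

/-- `v` is compact relative to `w`: whenever a nonempty downward directed family of
idempotents has an infimum `≤ v`, some member `u` satisfies `u ⊓ w ≤ v`. -/
def CompactRelTo (v w : C) : Prop :=
  ∀ D : Set C, D.Nonempty → (∀ u ∈ D, IsIdem u) → DirectedOn (· ≥ ·) D →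
    ∀ m : C, IsGLB D m → m ≤ v → ∃ u ∈ D, u ⊓ w ≤ v

/-- `C` has an abundance of compact idempotents: every idempotent is an infimum
of compact idempotents. -/
def HasAbundantCompactIdem (C : Type*) [ECCone C] : Prop :=
  ∀ w : C, IsIdem w → ∃ D : Set C, (∀ v ∈ D, IsCompactIdem v) ∧ IsGLB D w

/-- `C` is strongly connected: `{x : x ≤ w}` is connected for every idempotent `w`. -/
def StronglyConnected (C : Type*) [ECCone C] : Prop :=
  ∀ w : C, IsIdem w → IsConnected {x : C | x ≤ w}

/-- A linear function on a cone: additive, homogeneous, sending `0` to `0`. -/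
def IsLinFun (f : C → ℝ≥0∞) : Prop :=
  f 0 = 0 ∧ (∀ x y : C, f (x + y) = f x + f y) ∧
    ∀ (t : PosReal) (x : C), f (psmul t x) = ENNReal.ofReal t.1 * f x

/-- Membership in `Lsc(C)`: linear and lower semicontinuous. -/
def MemLsc (f : C → ℝ≥0∞) : Prop := IsLinFun f ∧ LowerSemicontinuous f

/-- Membership in `Lsc_σ(C)`: in `Lsc(C)` and `f⁻¹((a,∞])` is σ-compact for all `a < ∞`. -/
def MemLscSigma (f : C → ℝ≥0∞) : Prop :=
  MemLsc f ∧ ∀ a : ℝ≥0, IsSigmaCompact {x : C | (a : ℝ≥0∞) < f x}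

/-- Membership in `A(C)`: linear and continuous. -/
def MemA (f : C → ℝ≥0∞) : Prop := IsLinFun f ∧ Continuous f

/-- `w = supp f`, the supremum of `{x : f x = 0}`. -/
def IsSupp (f : C → ℝ≥0∞) (w : C) : Prop := IsLUB {x : C | f x = 0} w

/-- The relation `f ◁ g`: `f ≤ (1-ε)g` for some `ε > 0`, and `f` is continuous at every
point where `g` is finite. -/
def Lhd (f g : C → ℝ≥0∞) : Prop :=
  (∃ ε : ℝ, 0 < ε ∧ ∀ x, f x ≤ ENNReal.ofReal (1 - ε) * g x) ∧
    ∀ x : C, g x ≠ ⊤ → ContinuousAt f x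

end ECCone

/-! The complement of `{x | w ≫ ε(x)}` is `{x | x + m = x for some m ∈ K}`, where `K` is the
closure of the idempotents not below `w`; it is closed as the projection of a closed subset of
the compact space `C × C`. That `w ≫ e` fails exactly when some `m ∈ K` lies below `e` comes
from two compactness arguments. A downward directed set of idempotents has its infimum in its
closure, hence in `K` if no member is below `w`. Conversely, by local convexity an idempotent `m`
is the infimum of the directed family of suprema of the idempotents in its convex open
neighbourhoods; so if `w ≫ e` and `m ≤ e`, one such supremum is below `w`, and then so are all
idempotents near `m`, which forbids `m ∈ K`. -/

open Set

theorem DirectedOn.exists_isLUB_mem_closure {α : Type*} [TopologicalSpace α] [Preorder α]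
    [CompactSpace α] [ClosedIicTopology α] [ClosedIciTopology α] {s : Set α}
    (hd : DirectedOn (· ≤ ·) s) (hs : s.Nonempty) : ∃ a ∈ closure s, IsLUB s a := by
  have : Nonempty s := hs.to_subtype
  let tail : s → Set α := fun b => closure {c ∈ s | b.1 ≤ c}
  have htail : (⋂ b, tail b).Nonempty := by
    refine IsCompact.nonempty_iInter_of_directed_nonempty_isCompact_isClosed tail ?_
      (fun b => ⟨b, subset_closure ⟨b.2, le_rfl⟩⟩) (fun _ => isClosed_closure.isCompact)
      (fun _ => isClosed_closure)
    rintro ⟨b, hb⟩ ⟨c, hc⟩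
    obtain ⟨d, hd, hbd, hcd⟩ := hd b hb c hc
    exact ⟨⟨d, hd⟩, closure_mono fun x hx => ⟨hx.1, hbd.trans hx.2⟩,
      closure_mono fun x hx => ⟨hx.1, hcd.trans hx.2⟩⟩
  obtain ⟨a, ha⟩ := htail
  have ha_tail : ∀ b : s, a ∈ tail b := mem_iInter.1 ha
  have ha_closure : a ∈ closure s :=
    closure_mono (sep_subset _ _) (ha_tail ⟨hs.some, hs.some_mem⟩)
  refine ⟨a, ha_closure, fun b hb => ?_, fun b hb => ?_⟩
  · exact closure_minimal (fun c hc => hc.2) isClosed_Ici (ha_tail ⟨b, hb⟩)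
  · exact (upperBounds_closure s ▸ hb) ha_closure

theorem DirectedOn.exists_isGLB_mem_closure {α : Type*} [TopologicalSpace α] [Preorder α]
    [CompactSpace α] [ClosedIicTopology α] [ClosedIciTopology α] {s : Set α}
    (hd : DirectedOn (· ≥ ·) s) (hs : s.Nonempty) : ∃ a ∈ closure s, IsGLB s a := by
  have : CompactSpace αᵒᵈ := ‹CompactSpace α›
  exact DirectedOn.exists_isLUB_mem_closure (α := αᵒᵈ) hd hs

namespace ECCone

variable {C : Type*} [ECCone C]

instance : CompactSpace C := compact
instance : T2Space C := t2
instance : ContinuousAdd C := ⟨continuous_add'⟩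

def IsConvex (V : Set C) : Prop :=
  ∀ y ∈ V, ∀ z ∈ V, ∀ s t : PosReal, s.1 + t.1 = 1 → psmul s y + psmul t z ∈ V

theorem exists_isOpen_isConvex_subset {x : C} {U : Set C} (hU : IsOpen U) (hx : x ∈ U) :
    ∃ V, IsOpen V ∧ x ∈ V ∧ V ⊆ U ∧ IsConvex V :=
  locally_convex x U hU hx

protected theorem le_self_add (x z : C) : x ≤ x + z :=
  (le_iff_exists_add x (x + z)).2 ⟨z, rfl⟩

theorem IsSuppIdem.le_iff_add_eq_self {x e z : C} (he : IsSuppIdem x e) :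
    z ≤ e ↔ x + z = x := by
  refine ⟨fun hze => le_antisymm ?_ (ECCone.le_self_add x z), he.2 z⟩
  obtain ⟨c, rfl⟩ := (le_iff_exists_add z e).1 hze
  calc x + z ≤ x + z + c := ECCone.le_self_add _ c
    _ = x := by rw [add_assoc, he.1]

theorem IsIdem.add {u v : C} (hu : IsIdem u) (hv : IsIdem v) : IsIdem (u + v) := by
  unfold IsIdem at *
  calc u + v + (u + v) = (u + u) + (v + v) := by abel
    _ = u + v := by rw [hu, hv]

theorem IsIdem.psmul_eq_self {v : C} (hv : IsIdem v) {t : PosReal} (ht : t + t = 1) :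
    psmul t v = v :=
  calc psmul t v = psmul t (v + v) := by rw [hv]
    _ = psmul (t + t) v := by rw [psmul_add, add_psmul]
    _ = v := by rw [ht, one_psmul]

theorem IsConvex.add_mem {V : Set C} (hV : IsConvex V) {u v : C} (hu : IsIdem u)
    (hv : IsIdem v) (huV : u ∈ V) (hvV : v ∈ V) : u + v ∈ V := by
  let half : PosReal := ⟨1 / 2, by norm_num⟩
  have hhalf : half + half = 1 := Subtype.ext (by norm_num [half])
  have := hV u huV v hvV half half (by norm_num [half])
  rwa [hu.psmul_eq_self hhalf, hv.psmul_eq_self hhalf] at this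

theorem IsConvex.directedOn_isIdem {V : Set C} (hV : IsConvex V) :
    DirectedOn (· ≤ ·) {a | IsIdem a ∧ a ∈ V} := by
  rintro u ⟨hu, huV⟩ v ⟨hv, hvV⟩
  exact ⟨u + v, ⟨hu.add hv, hV.add_mem hu hv huV hvV⟩, ECCone.le_self_add u v,
    add_comm v u ▸ ECCone.le_self_add v u⟩

theorem isClosed_setOf_isIdem : IsClosed {v : C | IsIdem v} :=
  isClosed_eq (continuous_id.add continuous_id) continuous_id

instance : ClosedIciTopology C where
  isClosed_Ici a := by
    have : Ici a = range (a + ·) := by ext z; exact le_iff_exists_add a z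
    rw [this]
    exact (isCompact_range (continuous_const.add continuous_id)).isClosed

instance : ClosedIicTopology C where
  isClosed_Iic b := by
    have : Iic b = Prod.fst '' {p : C × C | p.1 + p.2 = b} := by
      ext z
      simp only [mem_Iic, le_iff_exists_add, mem_image, mem_ofPred_eq, Prod.exists,
        exists_and_right, exists_eq_right]
    rw [this]
    exact ((isClosed_eq continuous_add continuous_const).isCompact.image
      continuous_fst).isClosed

theorem isClosed_setOf_exists_add_eq_self {K : Set C} (hK : IsClosed K) :
    IsClosed {x : C | ∃ m ∈ K, x + m = x} := by
  have : {x : C | ∃ m ∈ K, x + m = x} =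
      Prod.fst '' {p : C × C | p.2 ∈ K ∧ p.1 + p.2 = p.1} := by
    ext x
    simp only [mem_ofPred_eq, mem_image, Prod.exists, exists_and_right, exists_eq_right]
  rw [this]
  exact ((hK.preimage continuous_snd).inter (isClosed_eq continuous_add continuous_fst)).isCompact
    |>.image continuous_fst |>.isClosed

theorem exists_directedOn_isGLB_of_isIdem {m : C} (hm : IsIdem m) :
    ∃ D : Set C, D.Nonempty ∧ (∀ q ∈ D, IsIdem q) ∧ DirectedOn (· ≥ ·) D ∧ IsGLB D m ∧
      ∀ q ∈ D, ∃ V, IsOpen V ∧ m ∈ V ∧ ∀ v ∈ V, IsIdem v → v ≤ q := by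
  let idemIn (V : Set C) : Set C := {a | IsIdem a ∧ a ∈ V}
  let D : Set C := {q | ∃ V, IsOpen V ∧ m ∈ V ∧ IsConvex V ∧
    q ∈ closure (idemIn V) ∧ IsLUB (idemIn V) q}
  have hD : ∀ U, IsOpen U → m ∈ U → ∃ V ⊆ U, ∃ q ∈ D, q ∈ closure U ∧ IsLUB (idemIn V) q := by
    intro U hU hmU
    obtain ⟨V, hVo, hmV, hVU, hV⟩ := exists_isOpen_isConvex_subset hU hmU
    obtain ⟨q, hqcl, hq⟩ := hV.directedOn_isIdem.exists_isLUB_mem_closure ⟨m, hm, hmV⟩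
    exact ⟨V, hVU, q, ⟨V, hVo, hmV, hV, hqcl, hq⟩,
      closure_mono (fun a ha => hVU ha.2) hqcl, hq⟩
  have hm_closure : m ∈ closure D := by
    refine mem_closure_iff.2 fun O hO hmO => ?_
    obtain ⟨Q, hQ, hQc, hQO⟩ := exists_mem_nhds_isClosed_subset (hO.mem_nhds hmO)
    obtain ⟨-, -, q, hqD, hqcl, -⟩ := hD _ isOpen_interior (mem_interior_iff_mem_nhds.2 hQ)
    exact ⟨q, hQO (closure_minimal interior_subset hQc hqcl), hqD⟩
  refine ⟨D, ?_, ?_, ?_, ⟨?_, ?_⟩, ?_⟩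
  · obtain ⟨-, -, q, hqD, -⟩ := hD univ isOpen_univ trivial
    exact ⟨q, hqD⟩
  · rintro q ⟨V, -, -, -, hqcl, -⟩
    exact closure_minimal (fun a ha => ha.1) isClosed_setOf_isIdem hqcl
  · rintro q₁ ⟨V₁, hV₁o, hmV₁, -, -, hq₁⟩ q₂ ⟨V₂, hV₂o, hmV₂, -, -, hq₂⟩
    obtain ⟨V, hVsub, q, hqD, -, hq⟩ := hD _ (hV₁o.inter hV₂o) (mem_inter hmV₁ hmV₂)
    exact ⟨q, hqD, hq.2 fun a ha => hq₁.1 ⟨ha.1, (hVsub ha.2).1⟩,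
      hq.2 fun a ha => hq₂.1 ⟨ha.1, (hVsub ha.2).2⟩⟩
  · rintro q ⟨V, -, hmV, -, -, hq⟩
    exact hq.1 ⟨hm, hmV⟩
  · intro b hb
    exact (lowerBounds_closure D ▸ hb) hm_closure
  · rintro q ⟨V, hVo, hmV, -, -, hq⟩
    exact ⟨V, hVo, hmV, fun v hv hvi => hq.1 ⟨hvi, hv⟩⟩

theorem IdemWayBelow.exists_isOpen_forall_isIdem_le {w u m : C} (hwu : IdemWayBelow w u)
    (hm : IsIdem m) (hmu : m ≤ u) :
    ∃ N, IsOpen N ∧ m ∈ N ∧ ∀ v ∈ N, IsIdem v → v ≤ w := by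
  obtain ⟨D, hne, hidem, hdir, hglb, hnhds⟩ := exists_directedOn_isGLB_of_isIdem hm
  obtain ⟨q, hqD, hqw⟩ := hwu D hne hidem hdir m hglb hmu
  obtain ⟨N, hNo, hmN, hN⟩ := hnhds q hqD
  exact ⟨N, hNo, hmN, fun v hv hvi => (hN v hv hvi).trans hqw⟩

theorem idemWayBelow_iff (w e : C) :
    IdemWayBelow w e ↔ ∀ m ∈ closure {v : C | IsIdem v ∧ ¬ v ≤ w}, ¬ m ≤ e := by
  constructor
  · intro hwe m hm hme
    have hmi : IsIdem m := closure_minimal (fun v hv => hv.1) isClosed_setOf_isIdem hm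
    obtain ⟨N, hNo, hmN, hN⟩ := hwe.exists_isOpen_forall_isIdem_le hmi hme
    obtain ⟨v, hvN, hvi, hvw⟩ := mem_closure_iff.1 hm N hNo hmN
    exact hvw (hN v hvN hvi)
  · intro h D hne hidem hdir m hglb hme
    by_contra! hD
    obtain ⟨p, hpD, hp⟩ := hdir.exists_isGLB_mem_closure hne
    rw [hp.unique hglb] at hpD
    have hD_sub : D ⊆ {v : C | IsIdem v ∧ ¬ v ≤ w} := fun v hv => ⟨hidem v hv, hD v hv⟩
    exact h m (closure_mono hD_sub hpD) hme

end ECCone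

theorem stmt_3_general {C : Type*} [ECCone C] (ε : C → C) (hε : ∀ x, ECCone.IsSuppIdem x (ε x))
    (w : C) :
    IsOpen {x : C | ECCone.IdemWayBelow w (ε x)} := by
  have h : {x : C | ECCone.IdemWayBelow w (ε x)} =
      {x | ∃ m ∈ closure {v : C | ECCone.IsIdem v ∧ ¬ v ≤ w}, x + m = x}ᶜ := by
    ext x
    simp only [mem_ofPred_eq, mem_compl_iff, ECCone.idemWayBelow_iff, (hε x).le_iff_add_eq_self,
      not_exists, not_and]
  rw [h]
  exact (ECCone.isClosed_setOf_exists_add_eq_self isClosed_closure).isOpen_compl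

/-- In an extended Choquet cone, for every idempotent `w` the set
`{x : w ≫ ε(x)}` is open. -/
theorem stmt_3 {C : Type*} [ECCone C] (ε : C → C) (hε : ∀ x, ECCone.IsSuppIdem x (ε x))
    (w : C) (hw : ECCone.IsIdem w) :
    IsOpen {x : C | ECCone.IdemWayBelow w (ε x)} :=
  stmt_3_general ε hε w
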